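/- For a finite rooted graph (G,∘), the root-exposure probability at temperature z > 0 is a non-decreasing function of z ∈ (0,∞); i.e., z ↦ z·P_{G-∘}(z)/P_G(z) is non-decreasing on (0,∞), where P denotes the matching polynomial. -/

import Mathlib

open scoped Classical

/-- A matching on a graph `G`: a set of edges of `G` that are pairwise non-adjacent. -/
def IsMatching {V : Type*} (G : SimpleGraph V) (M : Finset (Sym2 V)) : Prop :=
  (∀ e ∈ M, e ∈ G.edgeSet) ∧
    ∀ e ∈ M, ∀ f ∈ M, e ≠ f → ∀ v : V, v ∈ e → v ∉ f

/-- The matching polynomial `P_G(z) = Σ_{M matching of G} z^{|V| - 2|M|}`. -/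
noncomputable def matchingPolynomial {V : Type*} [Fintype V] (G : SimpleGraph V)
    (z : ℝ) : ℝ :=
  ∑ M ∈ Finset.univ.filter (fun M : Finset (Sym2 V) => IsMatching G M),
    z ^ (Fintype.card V - 2 * M.card)

/-- The root-exposure probability `R_z[G,∘] = z ⬝ P_{G-∘}(z) / P_G(z)`. -/
noncomputable def rootExposure {V : Type*} [Fintype V] (G : SimpleGraph V)
    (r : V) (z : ℝ) : ℝ :=
  z * matchingPolynomial (G.induce {v | v ≠ r}) z / matchingPolynomial G z

/-!
Substituting `t = z⁻²` turns the root-exposure probability into the ratio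
`Q_{s,r}(t) = m_{s-r}(t) / m_s(t)`, where `m_s(t) = ∑_M t^{|M|}` runs over the matchings of `G`
inside the vertex set `s`; so it suffices to show that `Q_{s,r}` is antitone on `t > 0`.
Sorting matchings by the partner of `r` gives `Q_{s,r}⁻¹ = 1 + ∑_{v ∼ r} t Q_{s-r,v}`, and
applying the same recursion to each summand gives
`t Q_{s-r,v} = (t⁻¹ + ∑_{w ∼ v} Q_{s-r-v,w})⁻¹`, in which `t` enters only through the antitone
`t⁻¹`. By strong induction on `s` the ratios `Q_{s-r-v,w}` are antitone, so each summand is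
monotone and `Q_{s,r}` is antitone.
-/

open Finset

namespace IsMatching

variable {V : Type*} {G : SimpleGraph V} {M : Finset (Sym2 V)}

lemma mono {M' : Finset (Sym2 V)} (h : IsMatching G M) (hM' : M' ⊆ M) : IsMatching G M' :=
  ⟨fun e he => h.1 e (hM' he), fun e he f hf hef => h.2 e (hM' he) f (hM' hf) hef⟩

lemma eq_of_mem_of_mem (h : IsMatching G M) {e f : Sym2 V} (he : e ∈ M) (hf : f ∈ M) {v : V}
    (hve : v ∈ e) (hvf : v ∈ f) : e = f := by
  by_contra hef
  exact h.2 e he f hf hef v hve hvf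

lemma insert (h : IsMatching G M) {a b : V} (hab : G.Adj a b)
    (hM : ∀ e ∈ M, a ∉ e ∧ b ∉ e) : IsMatching G (insert s(a, b) M) := by
  refine ⟨fun e he => ?_, fun e he f hf hef v hve hvf => ?_⟩
  · rcases mem_insert.mp he with rfl | he
    exacts [hab, h.1 e he]
  · have hfree : ∀ g ∈ M, v ∈ g → v ∉ s(a, b) := fun g hg hvg hv => by
      rcases Sym2.mem_iff.mp hv with rfl | rfl
      exacts [(hM g hg).1 hvg, (hM g hg).2 hvg]
    rcases mem_insert.mp he with rfl | he <;> rcases mem_insert.mp hf with rfl | hf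
    · exact hef rfl
    · exact hfree f hf hvf hve
    · exact hfree e he hve hvf
    · exact h.2 e he f hf hef v hve hvf

lemma two_mul_card_le [Fintype V] (h : IsMatching G M) : 2 * #M ≤ Fintype.card V := by
  classical
  have hdisj : (M : Set (Sym2 V)).PairwiseDisjoint Sym2.toFinset := fun e he f hf hef =>
    disjoint_left.mpr fun v hve hvf =>
      hef (h.eq_of_mem_of_mem he hf (Sym2.mem_toFinset.mp hve) (Sym2.mem_toFinset.mp hvf))
  calc 2 * #M = ∑ e ∈ M, #e.toFinset := by
        rw [sum_congr rfl fun e he => Sym2.card_toFinset_of_not_isDiag e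
          (G.not_isDiag_of_mem_edgeSet (h.1 e he)), sum_const, smul_eq_mul, mul_comm]
    _ = #(M.biUnion Sym2.toFinset) := (card_biUnion hdisj).symm
    _ ≤ Fintype.card V := card_le_univ _

lemma map_iff {W : Type*} {H : SimpleGraph W} (f : H ↪g G) {N : Finset (Sym2 W)} :
    IsMatching G (N.map f.toEmbedding.sym2Map) ↔ IsMatching H N := by
  have hinj := Sym2.map.injective f.injective
  simp only [IsMatching, mem_map, forall_exists_index, and_imp, forall_apply_eq_imp_iff₂,
    Function.Embedding.sym2Map_apply, RelEmbedding.coe_toEmbedding, f.map_mem_edgeSet_iff,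
    hinj.ne_iff, Sym2.mem_map, f.injective.eq_iff, exists_eq_right]

end IsMatching

section MatchingGenFun

variable {V : Type*} (G : SimpleGraph V)

noncomputable def matchingsIn (s : Finset V) : Finset (Finset (Sym2 V)) :=
  s.sym2.powerset.filter (IsMatching G)

noncomputable def matchingGenFun (s : Finset V) (t : ℝ) : ℝ :=
  ∑ M ∈ matchingsIn G s, t ^ #M

variable {G}

lemma mem_matchingsIn {s : Finset V} {M : Finset (Sym2 V)} :
    M ∈ matchingsIn G s ↔ M ⊆ s.sym2 ∧ IsMatching G M := by
  rw [matchingsIn, mem_filter, mem_powerset]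

lemma matchingsIn_map {W : Type*} {H : SimpleGraph W} (f : H ↪g G) (s : Finset W) :
    matchingsIn G (s.map f.toEmbedding) =
      (matchingsIn H s).map (mapEmbedding f.toEmbedding.sym2Map).toEmbedding := by
  ext M
  simp only [mem_matchingsIn, sym2_map, mem_map, subset_map_iff, RelEmbedding.coe_toEmbedding,
    mapEmbedding_apply]
  constructor
  · rintro ⟨⟨N, hN, rfl⟩, hM⟩
    exact ⟨N, ⟨hN, (IsMatching.map_iff f).mp hM⟩, rfl⟩
  · rintro ⟨N, ⟨hN, hM⟩, rfl⟩
    exact ⟨⟨N, hN, rfl⟩, (IsMatching.map_iff f).mpr hM⟩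

lemma matchingGenFun_map {W : Type*} {H : SimpleGraph W} (f : H ↪g G) (s : Finset W) (t : ℝ) :
    matchingGenFun G (s.map f.toEmbedding) t = matchingGenFun H s t := by
  simp [matchingGenFun, matchingsIn_map f, sum_map]

variable {s : Finset V} {r : V} {t : ℝ}

lemma matchingGenFun_pos (s : Finset V) (ht : 0 < t) : 0 < matchingGenFun G s t :=
  sum_pos (fun _ _ => pow_pos ht _)
    ⟨∅, mem_matchingsIn.mpr ⟨empty_subset _, by simp [IsMatching]⟩⟩

lemma mem_erase_of_adj {v : V} (hv : v ∈ s) (hrv : G.Adj r v) : v ∈ s.erase r :=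
  mem_erase.mpr ⟨hrv.ne', hv⟩

lemma mem_sym2_erase {e : Sym2 V} : e ∈ (s.erase r).sym2 ↔ e ∈ s.sym2 ∧ r ∉ e := by
  simp only [mem_sym2_iff, mem_erase]
  exact ⟨fun h => ⟨fun a ha => (h a ha).2, fun hr => (h r hr).1 rfl⟩,
    fun h a ha => ⟨fun har => h.2 (har ▸ ha), h.1 a ha⟩⟩

lemma filter_matchingsIn_avoiding :
    (matchingsIn G s).filter (fun M => ∀ e ∈ M, r ∉ e) = matchingsIn G (s.erase r) := by
  ext M
  simp only [mem_filter, mem_matchingsIn, subset_iff, mem_sym2_erase]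
  grind

lemma filter_matchingsIn_covering :
    (matchingsIn G s).filter (fun M => ¬∀ e ∈ M, r ∉ e) =
      {v ∈ s | G.Adj r v}.biUnion (fun v => (matchingsIn G s).filter (s(r, v) ∈ ·)) := by
  ext M
  simp only [mem_filter, mem_biUnion, mem_matchingsIn, not_forall, not_not]
  constructor
  · rintro ⟨⟨hMs, hM⟩, e, he, hre⟩
    obtain ⟨v, rfl⟩ := Sym2.mem_iff_exists.mp hre
    exact ⟨v, ⟨mem_sym2_iff.mp (hMs he) v (Sym2.mem_mk_right r v), hM.1 _ he⟩,
      ⟨hMs, hM⟩, he⟩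
  · rintro ⟨v, -, hMs, he⟩
    exact ⟨hMs, _, he, Sym2.mem_mk_left r v⟩

lemma insert_mem_matchingsIn_iff {v : V} (hrv : G.Adj r v) (hr : r ∈ s) (hv : v ∈ s)
    {N : Finset (Sym2 V)} (hN : s(r, v) ∉ N) :
    insert s(r, v) N ∈ matchingsIn G s ↔ N ∈ matchingsIn G ((s.erase r).erase v) := by
  rw [mem_matchingsIn, mem_matchingsIn, insert_subset_iff]
  simp only [subset_iff, mem_sym2_erase]
  constructor
  · rintro ⟨⟨-, hNs⟩, hM⟩
    have hfree : ∀ e ∈ N, r ∉ e ∧ v ∉ e := fun e he =>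
      ⟨fun hre => hN (hM.eq_of_mem_of_mem (mem_insert_of_mem he) (mem_insert_self _ _) hre
          (Sym2.mem_mk_left r v) ▸ he),
        fun hve => hN (hM.eq_of_mem_of_mem (mem_insert_of_mem he) (mem_insert_self _ _) hve
          (Sym2.mem_mk_right r v) ▸ he)⟩
    exact ⟨fun e he => ⟨⟨hNs he, (hfree e he).1⟩, (hfree e he).2⟩,
      hM.mono (subset_insert _ _)⟩
  · rintro ⟨hNs, hM⟩
    refine ⟨⟨mem_sym2_iff.mpr fun a ha => ?_, fun e he => (hNs he).1.1⟩,
      hM.insert hrv fun e he => ⟨(hNs he).1.2, (hNs he).2⟩⟩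
    rcases Sym2.mem_iff.mp ha with rfl | rfl
    exacts [hr, hv]

lemma sum_filter_matchingsIn_mem {v : V} (hrv : G.Adj r v) (hr : r ∈ s) (hv : v ∈ s) :
    ∑ M ∈ (matchingsIn G s).filter (s(r, v) ∈ ·), t ^ #M =
      t * matchingGenFun G ((s.erase r).erase v) t := by
  have hfresh : ∀ N ∈ matchingsIn G ((s.erase r).erase v), s(r, v) ∉ N := fun N hN he =>
    (mem_sym2_erase.mp (mem_sym2_erase.mp ((mem_matchingsIn.mp hN).1 he)).1).2
      (Sym2.mem_mk_left r v)
  rw [matchingGenFun, mul_sum]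
  refine sum_nbij' (fun M => M.erase s(r, v)) (insert s(r, v)) (fun M hM => ?_)
    (fun N hN => ?_) (fun M hM => insert_erase (mem_filter.mp hM).2)
    (fun N hN => erase_insert (hfresh N hN)) (fun M hM => ?_)
  · rw [← insert_mem_matchingsIn_iff hrv hr hv (notMem_erase _ _),
      insert_erase (mem_filter.mp hM).2]
    exact (mem_filter.mp hM).1
  · exact mem_filter.mpr ⟨(insert_mem_matchingsIn_iff hrv hr hv (hfresh N hN)).mpr hN,
      mem_insert_self _ _⟩
  · rw [card_erase_of_mem (mem_filter.mp hM).2, ← pow_succ',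
      Nat.sub_add_cancel (card_pos.mpr ⟨_, (mem_filter.mp hM).2⟩)]

lemma matchingGenFun_eq_add_sum (hr : r ∈ s) (t : ℝ) :
    matchingGenFun G s t = matchingGenFun G (s.erase r) t +
      t * ∑ v ∈ s with G.Adj r v, matchingGenFun G ((s.erase r).erase v) t := by
  have hdisj : (↑({v ∈ s | G.Adj r v} : Finset V) : Set V).PairwiseDisjoint
      (fun v => (matchingsIn G s).filter (s(r, v) ∈ ·)) := by
    intro v _ w _ hvw
    refine disjoint_left.mpr fun M hv hw => hvw ?_
    have hM := (mem_matchingsIn.mp (mem_filter.mp hv).1).2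
    exact Sym2.congr_right.mp (hM.eq_of_mem_of_mem (mem_filter.mp hv).2 (mem_filter.mp hw).2
      (Sym2.mem_mk_left r v) (Sym2.mem_mk_left r w))
  rw [matchingGenFun, ← sum_filter_add_sum_filter_not _ (fun M => ∀ e ∈ M, r ∉ e),
    filter_matchingsIn_avoiding, filter_matchingsIn_covering, sum_biUnion hdisj, mul_sum]
  congr 1
  refine sum_congr rfl fun v hv => ?_
  exact sum_filter_matchingsIn_mem (mem_filter.mp hv).2 hr (mem_filter.mp hv).1

variable (G) in
noncomputable def exposureRatio (s : Finset V) (r : V) (t : ℝ) : ℝ :=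
  matchingGenFun G (s.erase r) t / matchingGenFun G s t

lemma exposureRatio_pos (s : Finset V) (r : V) (ht : 0 < t) : 0 < exposureRatio G s r t :=
  div_pos (matchingGenFun_pos _ ht) (matchingGenFun_pos _ ht)

lemma inv_exposureRatio (hr : r ∈ s) (ht : 0 < t) :
    (exposureRatio G s r t)⁻¹ =
      1 + t * ∑ v ∈ s with G.Adj r v, exposureRatio G (s.erase r) v t := by
  simp only [exposureRatio]
  rw [inv_div, matchingGenFun_eq_add_sum hr, add_div, div_self (matchingGenFun_pos _ ht).ne',
    ← sum_div, mul_div_assoc]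

lemma mul_exposureRatio (hr : r ∈ s) (ht : 0 < t) :
    t * exposureRatio G s r t =
      (t⁻¹ + ∑ v ∈ s with G.Adj r v, exposureRatio G (s.erase r) v t)⁻¹ := by
  rw [← inv_inv (t * exposureRatio G s r t), mul_inv, inv_exposureRatio hr ht, mul_add,
    ← mul_assoc, inv_mul_cancel₀ ht.ne', one_mul, mul_one]

lemma exposureRatio_eq_inv_one_add_sum_inv (hr : r ∈ s) (ht : 0 < t) :
    exposureRatio G s r t = (1 + ∑ v ∈ s with G.Adj r v,
      (t⁻¹ + ∑ w ∈ s.erase r with G.Adj v w,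
        exposureRatio G ((s.erase r).erase v) w t)⁻¹)⁻¹ := by
  rw [← inv_inv (exposureRatio G s r t), inv_exposureRatio hr ht, mul_sum]
  congr 2
  refine sum_congr rfl fun v hv => ?_
  obtain ⟨hvs, hrv⟩ := mem_filter.mp hv
  exact mul_exposureRatio (mem_erase_of_adj hvs hrv) ht

variable (G) in
theorem exposureRatio_antitoneOn (s : Finset V) :
    ∀ r ∈ s, AntitoneOn (exposureRatio G s r) (Set.Ioi 0) := by
  induction s using Finset.strongInduction with | H s ih => ?_
  intro r hr t₁ ht₁ t₂ ht₂ hle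
  rw [exposureRatio_eq_inv_one_add_sum_inv hr ht₁, exposureRatio_eq_inv_one_add_sum_inv hr ht₂]
  have hsum_pos : ∀ v, ∀ t ∈ Set.Ioi (0 : ℝ),
      0 < t⁻¹ + ∑ w ∈ s.erase r with G.Adj v w, exposureRatio G ((s.erase r).erase v) w t :=
    fun v t ht => add_pos_of_pos_of_nonneg (inv_pos.mpr ht)
      (sum_nonneg fun w _ => (exposureRatio_pos _ w ht).le)
  gcongr with v hv w hw
  · exact add_pos_of_pos_of_nonneg one_pos
      (sum_nonneg fun v _ => (inv_pos.mpr (hsum_pos v t₁ ht₁)).le)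
  · exact hsum_pos v t₂ ht₂
  · obtain ⟨hvs, hrv⟩ := mem_filter.mp hv
    obtain ⟨hws, hvw⟩ := mem_filter.mp hw
    have hsub : (s.erase r).erase v ⊂ s :=
      (erase_ssubset (mem_erase_of_adj hvs hrv)).trans (erase_ssubset hr)
    exact ih _ hsub w (mem_erase_of_adj hws hvw) ht₁ ht₂ hle

lemma matchingPolynomial_eq_pow_mul_matchingGenFun [Fintype V] (G : SimpleGraph V) {z : ℝ}
    (hz : z ≠ 0) :
    matchingPolynomial G z = z ^ Fintype.card V * matchingGenFun G univ (z ^ 2)⁻¹ := by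
  have hmatchings : matchingsIn G univ = univ.filter (IsMatching G) := by simp [matchingsIn]
  rw [matchingPolynomial, matchingGenFun, hmatchings, mul_sum]
  refine sum_congr rfl fun M hM => ?_
  rw [inv_pow, ← pow_mul, pow_sub₀ z hz (mem_filter.mp hM).2.two_mul_card_le]

lemma rootExposure_eq_exposureRatio [Fintype V] (G : SimpleGraph V) (r : V) {z : ℝ}
    (hz : z ≠ 0) : rootExposure G r z = exposureRatio G univ r (z ^ 2)⁻¹ := by
  have hdel : (univ : Finset {v | v ≠ r}).map
      (SimpleGraph.Embedding.induce (G := G) _).toEmbedding = univ.erase r := by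
    ext v
    simp
  have hcard : Fintype.card {v | v ≠ r} + 1 = Fintype.card V := by
    rw [← card_univ, ← card_map, hdel, card_erase_add_one (mem_univ r), card_univ]
  rw [rootExposure, matchingPolynomial_eq_pow_mul_matchingGenFun G hz,
    matchingPolynomial_eq_pow_mul_matchingGenFun _ hz, ← matchingGenFun_map (G := G), hdel,
    exposureRatio, ← mul_assoc, ← pow_succ', hcard, mul_div_mul_left _ _ (pow_ne_zero _ hz)]

end MatchingGenFun

/-- For a finite rooted graph, the root-exposure probability is non-decreasing in the
temperature `z` on `(0, ∞)`. -/
theorem rootExposure_monotone {V : Type*} [Fintype V] (G : SimpleGraph V) (r : V) :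
    MonotoneOn (fun z => rootExposure G r z) (Set.Ioi (0 : ℝ)) := by
  have hsq_inv : AntitoneOn (fun z : ℝ => (z ^ 2)⁻¹) (Set.Ioi 0) := fun a ha b _ hab =>
    inv_anti₀ (pow_pos ha 2) (pow_le_pow_left₀ (le_of_lt ha) hab 2)
  refine ((exposureRatio_antitoneOn G univ r (mem_univ r)).comp hsq_inv
    fun z hz => Set.mem_Ioi.mpr (inv_pos.mpr (pow_pos hz 2))).congr fun z hz => ?_
  exact (rootExposure_eq_exposureRatio G r (ne_of_gt hz)).symm
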